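/- arXiv:1306.1449 — 4 statements merged into one kernel-verified Lean document; each statement's English description precedes it below -/
import Mathlib

section
/- Let μ > 0 and let h : ℝ → ℝ be continuous and 1-periodic. Then the function v = P∗h is twice continuously differentiable, 1-periodic, and satisfies v(x) − (μ/12)·v''(x) = h(x) for every x ∈ ℝ. -/
/-!
On the window `[x - 1, x]` the argument `x - y` of `P` stays in `[0, 1]`, where `P` is the
explicit combination `c (e^{bt} + e^b e^{-bt})` with `b = 2√(3/μ)`. Hence, by periodicity,
`P∗h` is a combination of the sliding exponential windows `∫_{x-1}^x e^{±b(x-y)} h(y) dy`, which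
are differentiated by the fundamental theorem of calculus. The boundary terms `h(x) - e^{±b} h(x-1)`
cancel in the first derivative and add up to `-b² h` in the second, giving `v'' = b² (v - h)`, and
`(μ/12) b² = 1`.
-/

/-- The 1-periodic Green's function of the operator `1 - (μ/12)∂ₓ²`. -/
noncomputable def P (μ x : ℝ) : ℝ :=
  Real.sqrt (3/μ) *
    (Real.exp (2 * Real.sqrt (3/μ) * (x - ⌊x⌋)) +
     Real.exp (2 * Real.sqrt (3/μ) * (1 - (x - ⌊x⌋)))) /
  (Real.exp (2 * Real.sqrt (3/μ)) - 1)

/-- Periodic convolution with the kernel `P` over one period. -/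
noncomputable def pconv (μ : ℝ) (h : ℝ → ℝ) (x : ℝ) : ℝ :=
  ∫ y in (0:ℝ)..1, P μ (x - y) * h y

open Real Set

noncomputable def expWindow (b : ℝ) (h : ℝ → ℝ) (x : ℝ) : ℝ :=
  ∫ y in (x - 1)..x, exp (b * (x - y)) * h y

section expWindow

variable {h : ℝ → ℝ}

theorem hasDerivAt_expWindow (b : ℝ) (hc : Continuous h) (x : ℝ) :
    HasDerivAt (expWindow b h) (b * expWindow b h x + h x - exp b * h (x - 1)) x := by
  set F : ℝ → ℝ := fun u => ∫ y in (0 : ℝ)..u, exp (-b * y) * h y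
  have hg : Continuous fun y => exp (-b * y) * h y := by fun_prop
  have hF : ∀ u, HasDerivAt F (exp (-b * u) * h u) u := fun u =>
    (hg.integral_hasStrictDerivAt 0 u).hasDerivAt
  have hwindow : expWindow b h = fun x => exp (b * x) * (F x - F (x - 1)) := by
    funext x
    rw [intervalIntegral.integral_interval_sub_left (hg.intervalIntegrable _ _)
      (hg.intervalIntegrable _ _), ← intervalIntegral.integral_const_mul]
    refine intervalIntegral.integral_congr fun y _ => ?_
    simp only [mul_sub, ← mul_assoc, ← exp_add]
    ring_nf
  have hexp : HasDerivAt (fun x => exp (b * x)) (exp (b * x) * b) x := by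
    simpa using ((hasDerivAt_id x).const_mul b).exp
  rw [hwindow]
  refine (hexp.mul ((hF x).sub ((hF (x - 1)).comp_sub_const x 1))).congr_deriv ?_
  have h₁ : exp (b * x) * exp (-b * x) = 1 := by rw [← exp_add]; ring_nf; exact exp_zero
  have h₂ : exp (b * x) * exp (-b * (x - 1)) = exp b := by rw [← exp_add]; ring_nf
  simp only [Pi.sub_apply]
  linear_combination h x * h₁ - h (x - 1) * h₂

variable (b : ℝ) (hc : Continuous h) (hp : Function.Periodic h 1)
include hc hp

theorem hasDerivAt_expWindow_of_periodic (x : ℝ) :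
    HasDerivAt (expWindow b h) (b * expWindow b h x + (1 - exp b) * h x) x := by
  simpa only [hp.sub_eq, sub_mul, one_mul, add_sub_assoc] using hasDerivAt_expWindow b hc x

theorem hasDerivAt_expWindow_add (x : ℝ) :
    HasDerivAt (fun x => expWindow b h x + exp b * expWindow (-b) h x)
      (b * (expWindow b h x - exp b * expWindow (-b) h x)) x := by
  refine ((hasDerivAt_expWindow_of_periodic b hc hp x).add
    ((hasDerivAt_expWindow_of_periodic (-b) hc hp x).const_mul (exp b))).congr_deriv ?_
  have : exp b * exp (-b) = 1 := by rw [← exp_add, add_neg_cancel, exp_zero]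
  linear_combination (-h x) * this

theorem hasDerivAt_expWindow_sub (x : ℝ) :
    HasDerivAt (fun x => expWindow b h x - exp b * expWindow (-b) h x)
      (b * (expWindow b h x + exp b * expWindow (-b) h x) + 2 * (1 - exp b) * h x) x := by
  refine ((hasDerivAt_expWindow_of_periodic b hc hp x).sub
    ((hasDerivAt_expWindow_of_periodic (-b) hc hp x).const_mul (exp b))).congr_deriv ?_
  have : exp b * exp (-b) = 1 := by rw [← exp_add, add_neg_cancel, exp_zero]
  linear_combination h x * this

end expWindow

theorem P_periodic (μ : ℝ) : Function.Periodic (P μ) 1 := by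
  intro x
  simp only [P, Int.floor_add_one, Int.cast_add, Int.cast_one]
  ring_nf

theorem P_eq_of_mem_Icc (μ : ℝ) {t : ℝ} (ht : t ∈ Icc 0 1) :
    P μ t = √(3 / μ) / (exp (2 * √(3 / μ)) - 1) *
      (exp (2 * √(3 / μ) * t) + exp (2 * √(3 / μ)) * exp (-(2 * √(3 / μ)) * t)) := by
  have hexp : ∀ s, exp (2 * √(3 / μ) * (1 - s)) =
      exp (2 * √(3 / μ)) * exp (-(2 * √(3 / μ)) * s) := fun s => by
    rw [← exp_add]; ring_nf
  rcases ht.2.lt_or_eq with ht1 | rfl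
  · rw [P, Int.floor_eq_zero_iff.2 ⟨ht.1, ht1⟩, Int.cast_zero, sub_zero, hexp]
    ring
  · simp only [P, Int.floor_one, Int.cast_one, sub_self, sub_zero, mul_zero, mul_one, exp_zero,
      ← exp_add, add_neg_cancel]
    ring

theorem pconv_periodic (μ : ℝ) (h : ℝ → ℝ) : Function.Periodic (pconv μ h) 1 := fun x =>
  intervalIntegral.integral_congr fun y _ => by
    simp only [add_sub_right_comm x 1 y, P_periodic μ (x - y)]

theorem pconv_eq_expWindow (μ : ℝ) {h : ℝ → ℝ} (hc : Continuous h) (hp : Function.Periodic h 1)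
    (x : ℝ) :
    pconv μ h x = √(3 / μ) / (exp (2 * √(3 / μ)) - 1) *
      (expWindow (2 * √(3 / μ)) h x + exp (2 * √(3 / μ)) * expWindow (-(2 * √(3 / μ))) h x) := by
  set b := 2 * √(3 / μ)
  have hper : Function.Periodic (fun y => P μ (x - y) * h y) 1 := fun y => by
    simp only [← sub_sub, (P_periodic μ).sub_eq, hp y]
  have hshift : pconv μ h x = ∫ y in (x - 1)..x, P μ (x - y) * h y := by
    rw [pconv]; simpa using hper.intervalIntegral_add_eq 0 (x - 1)
  have hint : ∀ b', IntervalIntegrable (fun y => exp (b' * (x - y)) * h y) MeasureTheory.volume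
      (x - 1) x := fun b' => by
    apply Continuous.intervalIntegrable; fun_prop
  rw [hshift, expWindow, expWindow, ← intervalIntegral.integral_const_mul,
    ← intervalIntegral.integral_add (hint b) ((hint (-b)).const_mul _),
    ← intervalIntegral.integral_const_mul]
  refine intervalIntegral.integral_congr fun y hy => ?_
  rw [uIcc_of_le (by linarith)] at hy
  rw [P_eq_of_mem_Icc μ ⟨by linarith [hy.2], by linarith [hy.1]⟩]
  ring

theorem contDiff_two_of_hasDerivAt {f f' f'' : ℝ → ℝ} (hf : ∀ x, HasDerivAt f (f' x) x)
    (hf' : ∀ x, HasDerivAt f' (f'' x) x) (hf'' : Continuous f'') : ContDiff ℝ 2 f := by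
  have hd : deriv f = f' := funext fun x => (hf x).deriv
  have hdd : deriv f' = f'' := funext fun x => (hf' x).deriv
  rw [show (2 : WithTop ℕ∞) = 1 + 1 from rfl, contDiff_succ_iff_deriv, hd, contDiff_one_iff_deriv,
    hdd]
  exact ⟨fun x => (hf x).differentiableAt, by simp, fun x => (hf' x).differentiableAt, hf''⟩

/-- For `μ > 0` and `h` continuous and 1-periodic, `v = P∗h` is twice continuously
differentiable, 1-periodic, and satisfies `v - (μ/12)·v'' = h` everywhere. -/
theorem stmt1 (μ : ℝ) (hμ : 0 < μ) (h : ℝ → ℝ) (hc : Continuous h)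
    (hp : Function.Periodic h 1) :
    ContDiff ℝ 2 (pconv μ h) ∧ Function.Periodic (pconv μ h) 1 ∧
      ∀ x : ℝ, pconv μ h x - (μ/12) * deriv (deriv (pconv μ h)) x = h x := by
  set a := √(3 / μ)
  set c := a / (exp (2 * a) - 1)
  have hE : exp (2 * a) - 1 ≠ 0 := sub_ne_zero.2 (one_lt_exp_iff.2 (by positivity)).ne'
  have hcE : c * (exp (2 * a) - 1) = a := div_mul_cancel₀ a hE
  have hv : pconv μ h =
      fun x => c * (expWindow (2 * a) h x + exp (2 * a) * expWindow (-(2 * a)) h x) :=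
    funext (pconv_eq_expWindow μ hc hp)
  clear_value c
  set v' := fun x => c * (2 * a * (expWindow (2 * a) h x - exp (2 * a) * expWindow (-(2 * a)) h x))
  have hv' : ∀ x, HasDerivAt (pconv μ h) (v' x) x := fun x => by
    rw [hv]; exact (hasDerivAt_expWindow_add (2 * a) hc hp x).const_mul c
  have hv'' : ∀ x, HasDerivAt v' ((2 * a) ^ 2 * (pconv μ h x - h x)) x := fun x => by
    refine (((hasDerivAt_expWindow_sub (2 * a) hc hp x).const_mul (2 * a)).const_mul
      c).congr_deriv ?_
    rw [hv]
    linear_combination (-4 * a * h x) * hcE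
  have hcoeff : μ / 12 * (2 * a) ^ 2 = 1 := by
    rw [mul_pow, sq_sqrt (by positivity)]; field_simp; norm_num
  have hcont : Continuous (pconv μ h) := continuous_iff_continuousAt.2 fun x => (hv' x).continuousAt
  refine ⟨contDiff_two_of_hasDerivAt hv' hv'' (by fun_prop), pconv_periodic μ h, fun x => ?_⟩
  rw [show deriv (pconv μ h) = v' from funext fun x => (hv' x).deriv, (hv'' x).deriv]
  linear_combination (h x - pconv μ h x) * hcoeff
end

section
/- Let u be a classical 1-periodic solution of the moderate-amplitude surface wave equation on [0,T). Then the energy E(t) = (1/2)∫₀¹ (u(x,t)² + (μ/12)·u_x(x,t)²) dx is constant in t on [0,T). -/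
/-!
Multiplying the equation by `u`, every term except `u u_t + (μ/12) u_x u_tx` is an exact
`x`-derivative, so by periodicity `∫₀¹ (u u_t + (μ/12) u_x u_tx) dx = 0` at every time; the
integrand is half the time derivative of the energy density. With only the regularity at hand,
`∂_t u_x = u_tx` has to be derived, by differentiating `u(x,t) - u(x,0) = ∫₀ᵗ u_t(x,τ) dτ` in `x`
under the integral sign, and the energy is compared at two times through
`E(t) - E(0) = ½ ∫₀¹ ∫₀ᵗ ∂_τ(u² + (μ/12) u_x²) dτ dx` and Fubini rather than by differentiating `E`.
-/

/-- A classical 1-periodic solution of the moderate-amplitude surface wave equation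
`u_t + u_x + (3/2)ε u u_x - (3/8)ε² u² u_x + (3/16)ε³ u³ u_x + (μ/12)(u_{xxx} - u_{xxt})
 + (7εμ/24)(u u_{xxx} + 2 u_x u_{xx}) = 0` on `ℝ × [0,T)`, recorded together with all the
partial derivatives appearing in the equation. -/
structure ClassicalSol (ε μ T : ℝ) where
  u : ℝ → ℝ → ℝ
  ux : ℝ → ℝ → ℝ
  uxx : ℝ → ℝ → ℝ
  uxxx : ℝ → ℝ → ℝ
  ut : ℝ → ℝ → ℝ
  utx : ℝ → ℝ → ℝ
  utxx : ℝ → ℝ → ℝ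
  periodic : ∀ t ∈ Set.Ico (0:ℝ) T, Function.Periodic (fun x => u x t) 1
  hux : ∀ (x : ℝ), ∀ t ∈ Set.Ico (0:ℝ) T, HasDerivAt (fun x' => u x' t) (ux x t) x
  huxx : ∀ (x : ℝ), ∀ t ∈ Set.Ico (0:ℝ) T, HasDerivAt (fun x' => ux x' t) (uxx x t) x
  huxxx : ∀ (x : ℝ), ∀ t ∈ Set.Ico (0:ℝ) T, HasDerivAt (fun x' => uxx x' t) (uxxx x t) x
  hut : ∀ (x : ℝ), ∀ t ∈ Set.Ico (0:ℝ) T,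
    HasDerivWithinAt (fun t' => u x t') (ut x t) (Set.Ico (0:ℝ) T) t
  hutx : ∀ (x : ℝ), ∀ t ∈ Set.Ico (0:ℝ) T, HasDerivAt (fun x' => ut x' t) (utx x t) x
  hutxx : ∀ (x : ℝ), ∀ t ∈ Set.Ico (0:ℝ) T, HasDerivAt (fun x' => utx x' t) (utxx x t) x
  contu : ContinuousOn (fun p : ℝ × ℝ => u p.1 p.2) (Set.univ ×ˢ Set.Ico (0:ℝ) T)
  contux : ContinuousOn (fun p : ℝ × ℝ => ux p.1 p.2) (Set.univ ×ˢ Set.Ico (0:ℝ) T)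
  contuxx : ContinuousOn (fun p : ℝ × ℝ => uxx p.1 p.2) (Set.univ ×ˢ Set.Ico (0:ℝ) T)
  contuxxx : ContinuousOn (fun p : ℝ × ℝ => uxxx p.1 p.2) (Set.univ ×ˢ Set.Ico (0:ℝ) T)
  contut : ContinuousOn (fun p : ℝ × ℝ => ut p.1 p.2) (Set.univ ×ˢ Set.Ico (0:ℝ) T)
  contutx : ContinuousOn (fun p : ℝ × ℝ => utx p.1 p.2) (Set.univ ×ˢ Set.Ico (0:ℝ) T)
  contutxx : ContinuousOn (fun p : ℝ × ℝ => utxx p.1 p.2) (Set.univ ×ˢ Set.Ico (0:ℝ) T)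
  eqn : ∀ (x : ℝ), ∀ t ∈ Set.Ico (0:ℝ) T,
    ut x t + ux x t + (3/2) * ε * u x t * ux x t - (3/8) * ε^2 * (u x t)^2 * ux x t
      + (3/16) * ε^3 * (u x t)^3 * ux x t + (μ/12) * (uxxx x t - utxx x t)
      + (7 * ε * μ / 24) * (u x t * uxxx x t + 2 * ux x t * uxx x t) = 0

open Set Function MeasureTheory intervalIntegral

theorem Function.Periodic.of_hasDerivAt {f f' : ℝ → ℝ} {c : ℝ} (hf : Periodic f c)
    (hf' : ∀ x, HasDerivAt f (f' x) x) : Periodic f' c := by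
  intro x
  have h := (hf' (x + c)).comp_add_const x c
  rw [show (fun y => f (y + c)) = f from funext hf] at h
  exact h.unique (hf' x)

theorem continuous_of_forall_hasDerivAt {f f' : ℝ → ℝ} (hf : ∀ x, HasDerivAt f (f' x) x) :
    Continuous f :=
  continuous_iff_continuousAt.2 fun x => (hf x).continuousAt

theorem ContinuousOn.uncurry_slice {α β γ : Type*} [TopologicalSpace α] [TopologicalSpace β]
    [TopologicalSpace γ] {f : α → β → γ} {s : Set β} (hf : ContinuousOn (uncurry f) (univ ×ˢ s))
    (x : α) : ContinuousOn (f x) s :=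
  hf.comp (Continuous.prodMk_right x).continuousOn fun _ hτ => ⟨mem_univ x, hτ⟩

theorem sub_eq_integral_of_hasDerivWithinAt_Ici {f f' : ℝ → ℝ} {a b t : ℝ}
    (hf : ContinuousOn f (Ico a b)) (hf' : ContinuousOn f' (Ico a b))
    (hderiv : ∀ s ∈ Ico a b, HasDerivWithinAt f (f' s) (Ici s) s) (ht : t ∈ Ico a b) :
    f t - f a = ∫ s in a..t, f' s := by
  have hsub : Icc a t ⊆ Ico a b := Icc_subset_Ico_right ht.2
  refine (integral_eq_sub_of_hasDeriv_right_of_le ht.1 (hf.mono hsub) (fun s hs => ?_)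
    ((hf'.mono hsub).intervalIntegrable_of_Icc ht.1)).symm
  exact (hderiv s (hsub (Ioo_subset_Icc_self hs))).mono Ioi_subset_Ici_self

theorem hasDerivWithinAt_Ici_of_eq_add_integral {g h : ℝ → ℝ} {a b t : ℝ}
    (hh : ContinuousOn h (Ico a b)) (hg : ∀ s ∈ Ico a b, g s = g a + ∫ r in a..s, h r)
    (ht : t ∈ Ico a b) : HasDerivWithinAt g (h t) (Ici t) t := by
  have hnhds : Ico a b ∈ nhdsWithin t (Ioi t) :=
    nhdsWithin_mono t Ioi_subset_Ici_self (Ico_mem_nhdsGE_of_mem ht)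
  have hprim : HasDerivWithinAt (fun s => g a + ∫ r in a..s, h r) (h t) (Ici t) t :=
    (integral_hasDerivWithinAt_right
      ((hh.mono (Icc_subset_Ico_right ht.2)).intervalIntegrable_of_Icc ht.1)
      ⟨Ico a b, hnhds, hh.aestronglyMeasurable measurableSet_Ico⟩
      ((hh t ht).mono_of_mem_nhdsWithin hnhds)).const_add (g a)
  refine hprim.congr_of_eventuallyEq ?_ (hg t ht)
  filter_upwards [Ico_mem_nhdsGE_of_mem ht] with s hs using hg s hs

theorem hasDerivAt_intervalIntegral_of_continuousOn {F F' : ℝ → ℝ → ℝ} {a b : ℝ}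
    (hF : ∀ y, ContinuousOn (F y) (uIcc a b))
    (hF' : ContinuousOn (uncurry F') (univ ×ˢ uIcc a b))
    (hderiv : ∀ y, ∀ τ ∈ uIcc a b, HasDerivAt (F · τ) (F' y τ) y) (x : ℝ) :
    HasDerivAt (fun y => ∫ τ in a..b, F y τ) (∫ τ in a..b, F' x τ) x := by
  obtain ⟨C, hC⟩ := (isCompact_Icc (a := x - 1) (b := x + 1)).prod isCompact_uIcc
    |>.exists_bound_of_continuousOn (hF'.mono (prod_mono (subset_univ _) subset_rfl))
  refine (hasDerivAt_integral_of_dominated_loc_of_deriv_le (bound := fun _ => C)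
    (Metric.ball_mem_nhds x one_pos) ?_ ((hF x).intervalIntegrable) ?_ ?_
    intervalIntegrable_const ?_).2
  · exact .of_forall fun y =>
      ((hF y).mono uIoc_subset_uIcc).aestronglyMeasurable measurableSet_uIoc
  · exact ((hF'.uncurry_slice x).mono uIoc_subset_uIcc).aestronglyMeasurable measurableSet_uIoc
  · refine .of_forall fun τ hτ y hy => hC (y, τ) ⟨?_, uIoc_subset_uIcc hτ⟩
    rw [Metric.mem_ball, Real.dist_eq, abs_lt] at hy
    constructor <;> linarith
  · exact .of_forall fun τ hτ y _ => hderiv y τ (uIoc_subset_uIcc hτ)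

theorem hasDerivWithinAt_Ici_of_mixed_partials {u ux ut utx : ℝ → ℝ → ℝ} {a b : ℝ}
    (hux : ∀ x, ∀ t ∈ Ico a b, HasDerivAt (u · t) (ux x t) x)
    (hut : ∀ x, ∀ t ∈ Ico a b, HasDerivWithinAt (u x ·) (ut x t) (Ici t) t)
    (hutx : ∀ x, ∀ t ∈ Ico a b, HasDerivAt (ut · t) (utx x t) x)
    (hu : ∀ x, ContinuousOn (u x) (Ico a b)) (hut_cont : ∀ x, ContinuousOn (ut x) (Ico a b))
    (hutx_cont : ContinuousOn (uncurry utx) (univ ×ˢ Ico a b))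
    (x : ℝ) {t : ℝ} (ht : t ∈ Ico a b) :
    HasDerivWithinAt (ux x ·) (utx x t) (Ici t) t := by
  have hux_sub : ∀ s ∈ Ico a b, ux x s - ux x a = ∫ τ in a..s, utx x τ := by
    intro s hs
    have hsub : uIcc a s ⊆ Ico a b := by
      rw [uIcc_of_le hs.1]; exact Icc_subset_Ico_right hs.2
    have hu_sub : (fun y => u y s - u y a) = fun y => ∫ τ in a..s, ut y τ :=
      funext fun y => sub_eq_integral_of_hasDerivWithinAt_Ici (hu y) (hut_cont y) (hut y) hs
    have hint := hasDerivAt_intervalIntegral_of_continuousOn (fun y => (hut_cont y).mono hsub)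
      (hutx_cont.mono (prod_mono subset_rfl hsub)) (fun y τ hτ => hutx y τ (hsub hτ)) x
    rw [← hu_sub] at hint
    exact ((hux x s hs).sub (hux x a (left_mem_Ico.2 (hs.1.trans_lt hs.2)))).unique hint
  exact hasDerivWithinAt_Ici_of_eq_add_integral (hutx_cont.uncurry_slice x)
    (fun s hs => by linarith [hux_sub s hs]) ht

theorem intervalIntegral_eq_of_sub_eq_integral {e q : ℝ → ℝ → ℝ} {a b t₀ t : ℝ}
    (he : ∀ x, e x t - e x t₀ = ∫ τ in t₀..t, q x τ)
    (hq : ContinuousOn (uncurry q) (uIcc a b ×ˢ uIcc t₀ t))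
    (hq_zero : ∀ τ ∈ uIcc t₀ t, ∫ x in a..b, q x τ = 0)
    (het : IntervalIntegrable (e · t) volume a b) (het₀ : IntervalIntegrable (e · t₀) volume a b) :
    ∫ x in a..b, e x t = ∫ x in a..b, e x t₀ := by
  rw [← sub_eq_zero, ← integral_sub het het₀]
  calc ∫ x in a..b, (e x t - e x t₀)
      = ∫ x in a..b, ∫ τ in t₀..t, q x τ := integral_congr fun x _ => he x
    _ = ∫ τ in t₀..t, ∫ x in a..b, q x τ :=
        intervalIntegral_intervalIntegral_swap
          ((hq.integrableOn_compact (isCompact_uIcc.prod isCompact_uIcc)).mono_set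
            (prod_mono uIoc_subset_uIcc uIoc_subset_uIcc))
    _ = 0 := by simp [integral_congr hq_zero]

-- Multiplying the equation by `u`, every term except `u u_t + (μ/12) u_x u_tx` is an exact
-- `x`-derivative; this is the antiderivative of the remaining terms.
noncomputable def surfaceWaveFlux (ε μ : ℝ) (u ux uxx utx : ℝ → ℝ) (x : ℝ) : ℝ :=
  μ / 12 * (u x * utx x) - (u x ^ 2 / 2 + ε / 2 * u x ^ 3 - 3 / 32 * ε ^ 2 * u x ^ 4
    + 3 / 80 * ε ^ 3 * u x ^ 5 + μ / 12 * (u x * uxx x - ux x ^ 2 / 2)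
    + 7 * ε * μ / 24 * (u x ^ 2 * uxx x))

section Slice

variable {ε μ : ℝ} {u ux uxx uxxx ut utx utxx : ℝ → ℝ}

theorem hasDerivAt_surfaceWaveFlux (hux : ∀ x, HasDerivAt u (ux x) x)
    (huxx : ∀ x, HasDerivAt ux (uxx x) x) (huxxx : ∀ x, HasDerivAt uxx (uxxx x) x)
    (hutxx : ∀ x, HasDerivAt utx (utxx x) x)
    (heqn : ∀ x, ut x + ux x + (3/2) * ε * u x * ux x - (3/8) * ε^2 * (u x)^2 * ux x
      + (3/16) * ε^3 * (u x)^3 * ux x + (μ/12) * (uxxx x - utxx x)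
      + (7 * ε * μ / 24) * (u x * uxxx x + 2 * ux x * uxx x) = 0) (x : ℝ) :
    HasDerivAt (surfaceWaveFlux ε μ u ux uxx utx) (u x * ut x + μ / 12 * (ux x * utx x)) x := by
  have dU := hux x
  have dUX := huxx x
  have dUXX := huxxx x
  have h := ((dU.mul (hutxx x)).const_mul (μ / 12)).sub
    ((((((dU.pow 2).div_const 2).add ((dU.pow 3).const_mul (ε / 2))).sub
      ((dU.pow 4).const_mul (3 / 32 * ε ^ 2))).add ((dU.pow 5).const_mul (3 / 80 * ε ^ 3))).add
      (((dU.mul dUXX).sub ((dUX.pow 2).div_const 2)).const_mul (μ / 12)) |>.add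
      (((dU.pow 2).mul dUXX).const_mul (7 * ε * μ / 24)))
  refine h.congr_deriv ?_
  simp only [Pi.pow_apply]
  push_cast
  linear_combination (-u x) * heqn x

theorem integral_mul_add_mul_eq_zero_of_periodic {L : ℝ} (hu : Periodic u L) (hut : Periodic ut L)
    (hux : ∀ x, HasDerivAt u (ux x) x) (huxx : ∀ x, HasDerivAt ux (uxx x) x)
    (huxxx : ∀ x, HasDerivAt uxx (uxxx x) x) (hutx : ∀ x, HasDerivAt ut (utx x) x)
    (hutxx : ∀ x, HasDerivAt utx (utxx x) x)
    (heqn : ∀ x, ut x + ux x + (3/2) * ε * u x * ux x - (3/8) * ε^2 * (u x)^2 * ux x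
      + (3/16) * ε^3 * (u x)^3 * ux x + (μ/12) * (uxxx x - utxx x)
      + (7 * ε * μ / 24) * (u x * uxxx x + 2 * ux x * uxx x) = 0) :
    ∫ x in (0:ℝ)..L, (u x * ut x + μ / 12 * (ux x * utx x)) = 0 := by
  have hux_per := hu.of_hasDerivAt hux
  have huxx_per := hux_per.of_hasDerivAt huxx
  have hutx_per := hut.of_hasDerivAt hutx
  have hcont : Continuous fun x => u x * ut x + μ / 12 * (ux x * utx x) := by
    have cu := continuous_of_forall_hasDerivAt hux
    have cux := continuous_of_forall_hasDerivAt huxx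
    have cut := continuous_of_forall_hasDerivAt hutx
    have cutx := continuous_of_forall_hasDerivAt hutxx
    fun_prop
  rw [integral_eq_sub_of_hasDerivAt (fun x _ => hasDerivAt_surfaceWaveFlux hux huxx huxxx hutxx heqn x)
    (hcont.intervalIntegrable 0 L), sub_eq_zero]
  simp only [surfaceWaveFlux, hu.eq, hux_per.eq, huxx_per.eq, hutx_per.eq]

end Slice
namespace ClassicalSol

variable {ε μ T : ℝ} (sol : ClassicalSol ε μ T)

theorem hasDerivWithinAt_u_Ici (x : ℝ) {t : ℝ} (ht : t ∈ Ico 0 T) :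
    HasDerivWithinAt (sol.u x ·) (sol.ut x t) (Ici t) t :=
  (sol.hut x t ht).mono_of_mem_nhdsWithin (Ico_mem_nhdsGE_of_mem ht)

theorem hasDerivWithinAt_ux_Ici (x : ℝ) {t : ℝ} (ht : t ∈ Ico 0 T) :
    HasDerivWithinAt (sol.ux x ·) (sol.utx x t) (Ici t) t :=
  hasDerivWithinAt_Ici_of_mixed_partials sol.hux (fun x _ ht => sol.hasDerivWithinAt_u_Ici x ht)
    sol.hutx sol.contu.uncurry_slice sol.contut.uncurry_slice sol.contutx x ht

theorem periodic_ut {t : ℝ} (ht : t ∈ Ico 0 T) : Periodic (sol.ut · t) 1 := fun x =>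
  (uniqueDiffOn_Ico 0 T t ht).eq_deriv _
    ((sol.hut (x + 1) t ht).congr (fun s hs => (sol.periodic s hs x).symm)
      (sol.periodic t ht x).symm)
    (sol.hut x t ht)

theorem integral_u_mul_ut_add_eq_zero {t : ℝ} (ht : t ∈ Ico 0 T) :
    ∫ x in (0:ℝ)..1, (sol.u x t * sol.ut x t + μ / 12 * (sol.ux x t * sol.utx x t)) = 0 :=
  integral_mul_add_mul_eq_zero_of_periodic (sol.periodic t ht) (sol.periodic_ut ht)
    (sol.hux · t ht) (sol.huxx · t ht) (sol.huxxx · t ht) (sol.hutx · t ht) (sol.hutxx · t ht)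
    (sol.eqn · t ht)

theorem continuous_energyDensity {t : ℝ} (ht : t ∈ Ico 0 T) :
    Continuous fun x => sol.u x t ^ 2 + μ / 12 * sol.ux x t ^ 2 := by
  have cu := continuous_of_forall_hasDerivAt (sol.hux · t ht)
  have cux := continuous_of_forall_hasDerivAt (sol.huxx · t ht)
  fun_prop

theorem energyDensity_sub_eq_integral (x : ℝ) {t : ℝ} (ht : t ∈ Ico 0 T) :
    (sol.u x t ^ 2 + μ / 12 * sol.ux x t ^ 2) - (sol.u x 0 ^ 2 + μ / 12 * sol.ux x 0 ^ 2)
      = ∫ τ in (0:ℝ)..t, 2 * (sol.u x τ * sol.ut x τ + μ / 12 * (sol.ux x τ * sol.utx x τ)) := by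
  have cu := sol.contu.uncurry_slice x
  have cux := sol.contux.uncurry_slice x
  have cut := sol.contut.uncurry_slice x
  have cutx := sol.contutx.uncurry_slice x
  refine sub_eq_integral_of_hasDerivWithinAt_Ici
    (f := fun τ => sol.u x τ ^ 2 + μ / 12 * sol.ux x τ ^ 2) (by fun_prop) (by fun_prop)
    (fun s hs => ?_) ht
  refine (((sol.hasDerivWithinAt_u_Ici x hs).pow 2).add
    (((sol.hasDerivWithinAt_ux_Ici x hs).pow 2).const_mul (μ / 12))).congr_deriv ?_
  push_cast
  ring

end ClassicalSol

theorem stmt4_general (ε μ T : ℝ)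
    (sol : ClassicalSol ε μ T) :
    ∀ t ∈ Set.Ico (0:ℝ) T,
      (1/2) * (∫ x in (0:ℝ)..1, ((sol.u x t)^2 + (μ/12) * (sol.ux x t)^2))
        = (1/2) * (∫ x in (0:ℝ)..1, ((sol.u x 0)^2 + (μ/12) * (sol.ux x 0)^2)) := by
  intro t ht
  have h0 : (0:ℝ) ∈ Ico 0 T := left_mem_Ico.2 (ht.1.trans_lt ht.2)
  have hsub : uIcc 0 t ⊆ Ico 0 T := by
    rw [uIcc_of_le ht.1]
    exact Icc_subset_Ico_right ht.2
  have hcont : ContinuousOn (uncurry fun x τ => 2 * (sol.u x τ * sol.ut x τ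
      + μ / 12 * (sol.ux x τ * sol.utx x τ))) (uIcc 0 1 ×ˢ uIcc 0 t) := by
    have hsub' := prod_mono (subset_univ (uIcc (0:ℝ) 1)) hsub
    have := sol.contu.mono hsub'
    have := sol.contux.mono hsub'
    have := sol.contut.mono hsub'
    have := sol.contutx.mono hsub'
    fun_prop
  congr 1
  refine intervalIntegral_eq_of_sub_eq_integral
    (e := fun x τ => sol.u x τ ^ 2 + μ / 12 * sol.ux x τ ^ 2)
    (fun x => sol.energyDensity_sub_eq_integral x ht) hcont (fun τ hτ => ?_) ((sol.continuous_energyDensity ht).intervalIntegrable _ _)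
    ((sol.continuous_energyDensity h0).intervalIntegrable _ _)
  rw [intervalIntegral.integral_const_mul, sol.integral_u_mul_ut_add_eq_zero (hsub hτ), mul_zero]

/-- The energy `E(t) = (1/2)∫₀¹ (u² + (μ/12)u_x²) dx` is conserved for classical
1-periodic solutions of the moderate-amplitude surface wave equation. -/
theorem stmt4 (ε μ T : ℝ) (hε : 0 < ε) (hμ : 0 < μ) (hT : 0 < T)
    (sol : ClassicalSol ε μ T) :
    ∀ t ∈ Set.Ico (0:ℝ) T,
      (1/2) * (∫ x in (0:ℝ)..1, ((sol.u x t)^2 + (μ/12) * (sol.ux x t)^2))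
        = (1/2) * (∫ x in (0:ℝ)..1, ((sol.u x 0)^2 + (μ/12) * (sol.ux x 0)^2)) :=
  stmt4_general ε μ T sol
end

section
/- Let u be a classical 1-periodic solution of the moderate-amplitude surface wave equation on [0,T), and suppose there are constants M₀, M₁ ≥ 0 with |u(x,t)| ≤ M₀ and u_x(x,t) ≤ M₁ for all x ∈ [0,1], t ∈ [0,T). Define H(t) = (1/2)∫₀¹ (u² + (μ/6)·u_x² + (μ²/144)·u_{xx}²) dx. Then there is a constant K ≥ 0, depending only on ε, μ, M₀, M₁, such that H(t) ≤ H(0)·e^{K t} for all t ∈ [0,T). In particular, H remains bounded on any finite time interval on which the slope u_x is bounded above. -/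
/-!
Multiplying the equation by `u - (μ/12) u_xx` and integrating over a period, every term that is
an exact `x`-derivative drops out by periodicity, leaving
`H' = ∫₀¹ (εμ/8 u - ε²μ/32 u² + ε³μ/64 u³) u_x u_xx + (7εμ²/192) u_x u_xx²`.
The first part is controlled by `|u| ≤ M₀` and `2|u_x u_xx| ≤ u_x² + u_xx²`, the second by
`u_x ≤ M₁` alone since `u_xx² ≥ 0`; hence `H' ≤ K H`, and Gronwall's inequality concludes.
-/

open Set MeasureTheory Filter Metric

theorem Function.Periodic.periodic_of_hasDerivAt {f f' : ℝ → ℝ} {c : ℝ}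
    (hf : Function.Periodic f c) (hd : ∀ x, HasDerivAt f (f' x) x) :
    Function.Periodic f' c := fun x => by
  have h := (hd (x + c)).comp_add_const x c
  rw [show (fun y => f (y + c)) = f from funext hf] at h
  exact h.unique (hd x)

theorem intervalIntegral_eq_of_periodic_of_hasDerivAt {F G W : ℝ → ℝ} {c : ℝ}
    (hW : Function.Periodic W c) (hd : ∀ x, HasDerivAt W (F x - G x) x)
    (hF : Continuous F) (hG : Continuous G) :
    ∫ x in (0:ℝ)..c, F x = ∫ x in (0:ℝ)..c, G x := by
  rw [← sub_eq_zero, ← intervalIntegral.integral_sub (hF.intervalIntegrable _ _)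
    (hG.intervalIntegrable _ _), intervalIntegral.integral_eq_sub_of_hasDerivAt
    (fun x _ => hd x) ((hF.sub hG).intervalIntegrable _ _), ← zero_add c, hW 0, sub_self]

theorem eq_add_integral_of_hasDerivWithinAt_Ico {f f' : ℝ → ℝ} {a b t : ℝ}
    (hd : ∀ s ∈ Ico a b, HasDerivWithinAt f (f' s) (Ico a b) s)
    (hf' : ContinuousOn f' (Ico a b)) (ht : t ∈ Ico a b) :
    f t = f a + ∫ s in a..t, f' s := by
  have hsub : Icc a t ⊆ Ico a b := Icc_subset_Ico_right ht.2
  rw [intervalIntegral.integral_eq_sub_of_hasDeriv_right_of_le ht.1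
    (fun s hs => (hd s (hsub hs)).continuousWithinAt.mono hsub)
    (fun s hs => (hd s (hsub (Ioo_subset_Icc_self hs))).mono_of_mem_nhdsWithin
      (Ico_mem_nhdsGT_of_mem ⟨hs.1.le, hs.2.trans ht.2⟩))
    ((hf'.mono hsub).intervalIntegrable_of_Icc ht.1)]
  ring

theorem hasDerivAt_of_eq_add_integral {f f' : ℝ → ℝ} {a b s : ℝ}
    (hf' : ContinuousOn f' (Ico a b)) (hrep : ∀ t ∈ Ico a b, f t = f a + ∫ σ in a..t, f' σ)
    (hs : s ∈ Ioo a b) : HasDerivAt f (f' s) s := by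
  have hsI : s ∈ Ico a b := Ioo_subset_Ico_self hs
  have hI := (intervalIntegral.integral_hasDerivAt_right
    ((hf'.mono (Icc_subset_Ico_right hsI.2)).intervalIntegrable_of_Icc hsI.1)
    ((hf'.mono Ioo_subset_Ico_self).stronglyMeasurableAtFilter isOpen_Ioo s hs)
    ((hf' s hsI).continuousAt (Ico_mem_nhds hs.1 hs.2))).const_add (f a)
  exact hI.congr_of_eventuallyEq (eventually_of_mem (Ioo_mem_nhds hs.1 hs.2)
    fun y hy => hrep y (Ioo_subset_Ico_self hy))

theorem hasDerivAt_intervalIntegral_of_continuousOn_s6 {F F' : ℝ → ℝ → ℝ} {a b x₀ r : ℝ}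
    (hab : a ≤ b) (hr : 0 < r) (hF : ∀ y ∈ ball x₀ r, ContinuousOn (F y) (Icc a b))
    (hF' : ContinuousOn (fun p : ℝ × ℝ => F' p.1 p.2) (closedBall x₀ r ×ˢ Icc a b))
    (hd : ∀ y ∈ ball x₀ r, ∀ s ∈ Icc a b, HasDerivAt (fun y => F y s) (F' y s) y) :
    HasDerivAt (fun y => ∫ s in a..b, F y s) (∫ s in a..b, F' x₀ s) x₀ := by
  obtain ⟨C, hC⟩ :=
    ((isCompact_closedBall x₀ r).prod isCompact_Icc).exists_bound_of_continuousOn hF'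
  have hx₀ : x₀ ∈ ball x₀ r := mem_ball_self hr
  have hF'x₀ : ContinuousOn (F' x₀) (Icc a b) :=
    hF'.comp (continuousOn_const.prodMk continuousOn_id)
      fun s hs => ⟨ball_subset_closedBall hx₀, hs⟩
  have hIoc : uIoc a b ⊆ Icc a b := (uIoc_of_le hab).trans_subset Ioc_subset_Icc_self
  refine (intervalIntegral.hasDerivAt_integral_of_dominated_loc_of_deriv_le (bound := fun _ => C)
    (ball_mem_nhds x₀ hr) ?_ ((hF x₀ hx₀).intervalIntegrable_of_Icc hab) ?_ ?_
    intervalIntegrable_const ?_).2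
  · filter_upwards [ball_mem_nhds x₀ hr] with y hy
    exact ((hF y hy).mono hIoc).aestronglyMeasurable measurableSet_uIoc
  · exact (hF'x₀.mono hIoc).aestronglyMeasurable measurableSet_uIoc
  · exact ae_of_all _ fun s hs y hy => hC (y, s) ⟨ball_subset_closedBall hy, hIoc hs⟩
  · exact ae_of_all _ fun s hs y hy => hd y hy s (hIoc hs)

theorem le_mul_exp_of_hasDerivAt_le {f f' : ℝ → ℝ} {K a b : ℝ} (hab : a ≤ b)
    (hf : ContinuousOn f (Icc a b)) (hd : ∀ s ∈ Ioo a b, HasDerivAt f (f' s) s)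
    (hbound : ∀ s ∈ Ioo a b, f' s ≤ K * f s) :
    f b ≤ f a * Real.exp (K * (b - a)) := by
  have hφ : ∀ s ∈ Ioo a b, HasDerivAt (fun s => f s * Real.exp (K * (a - s)))
      (f' s * Real.exp (K * (a - s)) + f s * (Real.exp (K * (a - s)) * -K)) s := fun s hs =>
    (hd s hs).mul (by simpa using ((hasDerivAt_id s).const_sub a |>.const_mul K).exp)
  have hanti : AntitoneOn (fun s => f s * Real.exp (K * (a - s))) (Icc a b) := by
    refine antitoneOn_of_deriv_nonpos (convex_Icc a b) (hf.mul (by fun_prop)) ?_ ?_ <;>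
      rw [interior_Icc]
    · exact fun s hs => (hφ s hs).differentiableAt.differentiableWithinAt
    · intro s hs
      rw [(hφ s hs).deriv]
      nlinarith [hbound s hs, Real.exp_pos (K * (a - s))]
  have h := hanti (left_mem_Icc.2 hab) (right_mem_Icc.2 hab) hab
  simp only [sub_self, mul_zero, Real.exp_zero, mul_one] at h
  calc f b = f b * Real.exp (K * (a - b)) * Real.exp (K * (b - a)) := by
        rw [mul_assoc, ← Real.exp_add, ← mul_add, sub_add_sub_cancel, sub_self, mul_zero,
          Real.exp_zero, mul_one]
    _ ≤ f a * Real.exp (K * (b - a)) := by gcongr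

theorem mul_mul_le_of_abs_le {a b c M : ℝ} (h : |a| ≤ M) :
    a * (b * c) ≤ M / 2 * (b ^ 2 + c ^ 2) := by
  obtain ⟨h₁, h₂⟩ := abs_le.1 h
  nlinarith [mul_nonneg (by linarith : 0 ≤ M + a) (sq_nonneg (b - c)),
    mul_nonneg (by linarith : 0 ≤ M - a) (sq_nonneg (b + c))]

noncomputable def growthRate (ε μ M₀ M₁ : ℝ) : ℝ :=
  (6 + 144 / μ) * (ε * M₀ / 8 + ε ^ 2 * M₀ ^ 2 / 32 + ε ^ 3 * M₀ ^ 3 / 64) + 21 / 2 * ε * M₁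

theorem growthRate_nonneg {ε μ M₀ M₁ : ℝ} (hε : 0 ≤ ε) (hμ : 0 ≤ μ) (hM₀ : 0 ≤ M₀)
    (hM₁ : 0 ≤ M₁) : 0 ≤ growthRate ε μ M₀ M₁ := by
  unfold growthRate; positivity

theorem flux_le_growthRate_mul {ε μ M₀ M₁ a b c : ℝ} (hε : 0 ≤ ε) (hμ : 0 < μ)
    (hM₁ : 0 ≤ M₁) (ha : |a| ≤ M₀) (hb : b ≤ M₁) :
    (ε * μ / 8 * a - ε ^ 2 * μ / 32 * a ^ 2 + ε ^ 3 * μ / 64 * a ^ 3) * b * c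
        + 7 * ε * μ ^ 2 / 192 * b * c ^ 2
      ≤ growthRate ε μ M₀ M₁ * (1 / 2 * (a ^ 2 + μ / 6 * b ^ 2 + μ ^ 2 / 144 * c ^ 2)) := by
  have hM₀ : 0 ≤ M₀ := (abs_nonneg a).trans ha
  have h₁ : a * (b * c) ≤ M₀ / 2 * (b ^ 2 + c ^ 2) := mul_mul_le_of_abs_le ha
  have h₂ : -a ^ 2 * (b * c) ≤ M₀ ^ 2 / 2 * (b ^ 2 + c ^ 2) := mul_mul_le_of_abs_le <| by
    rw [abs_neg, abs_pow]; exact pow_le_pow_left₀ (abs_nonneg a) ha 2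
  have h₃ : a ^ 3 * (b * c) ≤ M₀ ^ 3 / 2 * (b ^ 2 + c ^ 2) := mul_mul_le_of_abs_le <| by
    rw [abs_pow]; exact pow_le_pow_left₀ (abs_nonneg a) ha 3
  have h₄ : b * c ^ 2 ≤ M₁ * c ^ 2 := mul_le_mul_of_nonneg_right hb (sq_nonneg c)
  set A := ε * M₀ / 8 + ε ^ 2 * M₀ ^ 2 / 32 + ε ^ 3 * M₀ ^ 3 / 64
  have hsplit : growthRate ε μ M₀ M₁ * (1 / 2 * (a ^ 2 + μ / 6 * b ^ 2 + μ ^ 2 / 144 * c ^ 2))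
      = μ * A / 2 * (b ^ 2 + c ^ 2) + 7 * ε * μ ^ 2 / 192 * M₁ * c ^ 2
        + (growthRate ε μ M₀ M₁ / 2 * a ^ 2 + (12 * A + 7 / 8 * ε * μ * M₁) * b ^ 2
          + A * μ ^ 2 / 48 * c ^ 2) := by
    unfold growthRate; field_simp; ring
  have hrest : 0 ≤ growthRate ε μ M₀ M₁ / 2 * a ^ 2 + (12 * A + 7 / 8 * ε * μ * M₁) * b ^ 2
      + A * μ ^ 2 / 48 * c ^ 2 := by
    have := growthRate_nonneg hε hμ.le hM₀ hM₁; positivity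
  calc (ε * μ / 8 * a - ε ^ 2 * μ / 32 * a ^ 2 + ε ^ 3 * μ / 64 * a ^ 3) * b * c
        + 7 * ε * μ ^ 2 / 192 * b * c ^ 2
      = ε * μ / 8 * (a * (b * c)) + ε ^ 2 * μ / 32 * (-a ^ 2 * (b * c))
        + ε ^ 3 * μ / 64 * (a ^ 3 * (b * c)) + 7 * ε * μ ^ 2 / 192 * (b * c ^ 2) := by ring
    _ ≤ ε * μ / 8 * (M₀ / 2 * (b ^ 2 + c ^ 2)) + ε ^ 2 * μ / 32 * (M₀ ^ 2 / 2 * (b ^ 2 + c ^ 2))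
        + ε ^ 3 * μ / 64 * (M₀ ^ 3 / 2 * (b ^ 2 + c ^ 2)) + 7 * ε * μ ^ 2 / 192 * (M₁ * c ^ 2) := by
      gcongr
    _ = μ * A / 2 * (b ^ 2 + c ^ 2) + 7 * ε * μ ^ 2 / 192 * M₁ * c ^ 2 := by ring
    _ ≤ _ := by rw [hsplit]; exact le_add_of_nonneg_right hrest

section Slices

variable {T : ℝ} {f : ℝ → ℝ → ℝ}
  (hf : ContinuousOn (fun p : ℝ × ℝ => f p.1 p.2) (univ ×ˢ Ico 0 T))
include hf

theorem continuous_timeSlice {t : ℝ} (ht : t ∈ Ico 0 T) : Continuous fun x => f x t :=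
  hf.comp_continuous (continuous_id.prodMk continuous_const) fun _ => ⟨trivial, ht⟩

theorem continuousOn_spaceSlice (x : ℝ) : ContinuousOn (f x) (Ico 0 T) :=
  hf.comp (continuous_const.prodMk continuous_id).continuousOn fun _ hs => ⟨trivial, hs⟩

theorem continuousOn_swap_Ico :
    ContinuousOn (fun p : ℝ × ℝ => f p.2 p.1) (Ico 0 T ×ˢ univ) :=
  hf.comp continuous_swap.continuousOn fun _ hp => ⟨trivial, hp.1⟩

theorem continuous_restrict_Ico : Continuous fun q : Ico (0:ℝ) T × ℝ => f q.2 q.1 :=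
  hf.comp_continuous (continuous_snd.prodMk (continuous_subtype_val.comp continuous_fst))
    fun q => ⟨trivial, q.1.2⟩

end Slices

theorem eq_add_integral_of_hasDerivAt_of_eq_add_integral {T t : ℝ} {f f' g g' : ℝ → ℝ → ℝ}
    (ht : t ∈ Ico 0 T) (hrep : ∀ x, f x t = f x 0 + ∫ s in (0:ℝ)..t, g x s)
    (hf : ∀ x, ∀ s ∈ Ico 0 T, HasDerivAt (fun x => f x s) (f' x s) x)
    (hg : ∀ x, ∀ s ∈ Ico 0 T, HasDerivAt (fun x => g x s) (g' x s) x)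
    (hgc : ContinuousOn (fun p : ℝ × ℝ => g p.1 p.2) (univ ×ˢ Ico 0 T))
    (hg'c : ContinuousOn (fun p : ℝ × ℝ => g' p.1 p.2) (univ ×ˢ Ico 0 T)) (x : ℝ) :
    f' x t = f' x 0 + ∫ s in (0:ℝ)..t, g' x s := by
  have hsub : Icc 0 t ⊆ Ico 0 T := Icc_subset_Ico_right ht.2
  have hint := hasDerivAt_intervalIntegral_of_continuousOn_s6 ht.1 one_pos
    (fun y _ => (continuousOn_spaceSlice hgc y).mono hsub)
    (hg'c.mono (prod_mono (subset_univ _) hsub)) (fun y _ s hs => hg y s (hsub hs)) (x₀ := x)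
  have hsum := (hf x 0 ⟨le_rfl, ht.1.trans_lt ht.2⟩).fun_add hint
  rw [show (fun y => f y 0 + ∫ s in (0:ℝ)..t, g y s) = fun y => f y t from
    funext fun y => (hrep y).symm] at hsum
  exact (hf x t ht).unique hsum

namespace ClassicalSol

variable {ε μ T : ℝ} (sol : ClassicalSol ε μ T)

section Periodicity

variable {t : ℝ} (ht : t ∈ Ico 0 T)
include ht

theorem periodic_ux : Function.Periodic (fun x => sol.ux x t) 1 :=
  (sol.periodic t ht).periodic_of_hasDerivAt fun x => sol.hux x t ht

theorem periodic_uxx : Function.Periodic (fun x => sol.uxx x t) 1 :=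
  (sol.periodic_ux ht).periodic_of_hasDerivAt fun x => sol.huxx x t ht

theorem periodic_ut_s6 : Function.Periodic (fun x => sol.ut x t) 1 := fun x =>
  (uniqueDiffOn_Ico 0 T t ht).eq_deriv _
    ((sol.hut (x + 1) t ht).congr (fun s hs => (sol.periodic s hs x).symm)
      (sol.periodic t ht x).symm)
    (sol.hut x t ht)

theorem periodic_utx : Function.Periodic (fun x => sol.utx x t) 1 :=
  (sol.periodic_ut_s6 ht).periodic_of_hasDerivAt fun x => sol.hutx x t ht

end Periodicity

/- The structure only provides the time derivative of `u`; those of `u_x` and `u_xx` come from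
differentiating `u(x,t) = u(x,0) + ∫₀ᵗ u_t(x,s) ds` in `x`. -/
theorem u_eq_add_integral {t : ℝ} (ht : t ∈ Ico 0 T) (x : ℝ) :
    sol.u x t = sol.u x 0 + ∫ s in (0:ℝ)..t, sol.ut x s :=
  eq_add_integral_of_hasDerivWithinAt_Ico (sol.hut x) (continuousOn_spaceSlice sol.contut x) ht

theorem ux_eq_add_integral {t : ℝ} (ht : t ∈ Ico 0 T) (x : ℝ) :
    sol.ux x t = sol.ux x 0 + ∫ s in (0:ℝ)..t, sol.utx x s :=
  eq_add_integral_of_hasDerivAt_of_eq_add_integral ht (sol.u_eq_add_integral ht) sol.hux sol.hutx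
    sol.contut sol.contutx x

theorem uxx_eq_add_integral {t : ℝ} (ht : t ∈ Ico 0 T) (x : ℝ) :
    sol.uxx x t = sol.uxx x 0 + ∫ s in (0:ℝ)..t, sol.utxx x s :=
  eq_add_integral_of_hasDerivAt_of_eq_add_integral ht (sol.ux_eq_add_integral ht) sol.huxx
    sol.hutxx sol.contutx sol.contutxx x

section TimeDerivatives

variable (x : ℝ) {s : ℝ} (hs : s ∈ Ioo 0 T)
include hs

theorem hasDerivAt_u_time : HasDerivAt (fun t => sol.u x t) (sol.ut x s) s :=
  (sol.hut x s (Ioo_subset_Ico_self hs)).hasDerivAt (Ico_mem_nhds hs.1 hs.2)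

theorem hasDerivAt_ux_time : HasDerivAt (fun t => sol.ux x t) (sol.utx x s) s :=
  hasDerivAt_of_eq_add_integral (continuousOn_spaceSlice sol.contutx x)
    (fun _ ht => sol.ux_eq_add_integral ht x) hs

theorem hasDerivAt_uxx_time : HasDerivAt (fun t => sol.uxx x t) (sol.utxx x s) s :=
  hasDerivAt_of_eq_add_integral (continuousOn_spaceSlice sol.contutxx x)
    (fun _ ht => sol.uxx_eq_add_integral ht x) hs

end TimeDerivatives

noncomputable def energy (t : ℝ) : ℝ :=
  (1/2) * (∫ x in (0:ℝ)..1,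
    ((sol.u x t)^2 + (μ/6) * (sol.ux x t)^2 + (μ^2/144) * (sol.uxx x t)^2))

noncomputable def energyRate (t : ℝ) : ℝ :=
  ∫ x in (0:ℝ)..1,
    (sol.u x t * sol.ut x t + μ / 6 * (sol.ux x t * sol.utx x t)
      + μ ^ 2 / 144 * (sol.uxx x t * sol.utxx x t))

theorem continuousOn_energy : ContinuousOn sol.energy (Ico 0 T) := by
  have hu := continuous_restrict_Ico sol.contu
  have hux := continuous_restrict_Ico sol.contux
  have huxx := continuous_restrict_Ico sol.contuxx
  refine continuousOn_iff_continuous_domRestrict.2 (continuous_const.mul ?_)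
  exact intervalIntegral.continuous_parametric_intervalIntegral_of_continuous'
    (f := fun (t : Ico (0:ℝ) T) x =>
      (sol.u x t)^2 + (μ/6) * (sol.ux x t)^2 + (μ^2/144) * (sol.uxx x t)^2)
    (by fun_prop) 0 1

theorem hasDerivAt_energy {s : ℝ} (hs : s ∈ Ioo 0 T) :
    HasDerivAt sol.energy (sol.energyRate s) s := by
  obtain ⟨r, hr, hball⟩ := nhds_basis_closedBall.mem_iff.1 (Ioo_mem_nhds hs.1 hs.2)
  have hIco : closedBall s r ×ˢ Icc (0:ℝ) 1 ⊆ Ico 0 T ×ˢ univ :=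
    prod_mono (hball.trans Ioo_subset_Ico_self) (subset_univ _)
  have hu := (continuousOn_swap_Ico sol.contu).mono hIco
  have hux := (continuousOn_swap_Ico sol.contux).mono hIco
  have huxx := (continuousOn_swap_Ico sol.contuxx).mono hIco
  have hut := (continuousOn_swap_Ico sol.contut).mono hIco
  have hutx := (continuousOn_swap_Ico sol.contutx).mono hIco
  have hutxx := (continuousOn_swap_Ico sol.contutxx).mono hIco
  have hint := hasDerivAt_intervalIntegral_of_continuousOn_s6 zero_le_one hr
    (F := fun t x => (sol.u x t)^2 + (μ/6) * (sol.ux x t)^2 + (μ^2/144) * (sol.uxx x t)^2)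
    (F' := fun t x => 2 * (sol.u x t * sol.ut x t + μ / 6 * (sol.ux x t * sol.utx x t)
      + μ ^ 2 / 144 * (sol.uxx x t * sol.utxx x t)))
    (fun y hy => by
      have hy' : y ∈ Ico 0 T := Ioo_subset_Ico_self (hball (ball_subset_closedBall hy))
      have := continuous_timeSlice sol.contu hy'
      have := continuous_timeSlice sol.contux hy'
      have := continuous_timeSlice sol.contuxx hy'
      exact Continuous.continuousOn (by fun_prop))
    (by fun_prop) ?_
  · refine (hint.const_mul (1/2 : ℝ)).congr_deriv ?_
    rw [intervalIntegral.integral_const_mul, energyRate]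
    ring
  · intro y hy x _
    have hy' : y ∈ Ioo 0 T := hball (ball_subset_closedBall hy)
    exact ((((sol.hasDerivAt_u_time x hy').pow 2).add
      (((sol.hasDerivAt_ux_time x hy').pow 2).const_mul (μ/6))).add
      (((sol.hasDerivAt_uxx_time x hy').pow 2).const_mul (μ^2/144))).congr_deriv
        (by push_cast; ring)

theorem energyRate_eq {t : ℝ} (ht : t ∈ Ico 0 T) :
    sol.energyRate t = ∫ x in (0:ℝ)..1,
      ((ε * μ / 8 * sol.u x t - ε ^ 2 * μ / 32 * sol.u x t ^ 2 + ε ^ 3 * μ / 64 * sol.u x t ^ 3)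
          * sol.ux x t * sol.uxx x t + 7 * ε * μ ^ 2 / 192 * sol.ux x t * sol.uxx x t ^ 2) := by
  have hu := continuous_timeSlice sol.contu ht
  have hux := continuous_timeSlice sol.contux ht
  have huxx := continuous_timeSlice sol.contuxx ht
  have hut := continuous_timeSlice sol.contut ht
  have hutx := continuous_timeSlice sol.contutx ht
  have hutxx := continuous_timeSlice sol.contutxx ht
  -- `W` collects the exact `x`-derivatives in `(u - (μ/12) u_xx) · (equation)`.
  refine intervalIntegral_eq_of_periodic_of_hasDerivAt
    (W := fun y => -(1/2) * sol.u y t ^ 2 - ε / 2 * sol.u y t ^ 3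
      + 3 * ε ^ 2 / 32 * sol.u y t ^ 4 - 3 * ε ^ 3 / 80 * sol.u y t ^ 5
      + μ / 12 * sol.ux y t ^ 2 + μ ^ 2 / 288 * sol.uxx y t ^ 2
      + 7 * ε * μ ^ 2 / 576 * (sol.u y t * sol.uxx y t ^ 2)
      - 7 * ε * μ / 24 * (sol.u y t ^ 2 * sol.uxx y t)
      + μ / 12 * (sol.u y t * sol.utx y t) + μ / 12 * (sol.ux y t * sol.ut y t)
      - μ / 12 * (sol.u y t * sol.uxx y t)) (fun x => ?_) (fun x => ?_) (by fun_prop) (by fun_prop)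
  · simp only [sol.periodic t ht x, sol.periodic_ux ht x, sol.periodic_uxx ht x,
      sol.periodic_ut_s6 ht x, sol.periodic_utx ht x]
  · have A := sol.hux x t ht
    have B := sol.huxx x t ht
    have C := sol.huxxx x t ht
    have P := sol.hutx x t ht
    have Q := sol.hutxx x t ht
    refine (((((((((((((A.pow 2).const_mul (-(1/2 : ℝ))).sub ((A.pow 3).const_mul (ε / 2))).add
      ((A.pow 4).const_mul (3 * ε ^ 2 / 32))).sub ((A.pow 5).const_mul (3 * ε ^ 3 / 80))).add
      ((B.pow 2).const_mul (μ / 12))).add ((C.pow 2).const_mul (μ ^ 2 / 288))).add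
      ((A.mul (C.pow 2)).const_mul (7 * ε * μ ^ 2 / 576))).sub
      (((A.pow 2).mul C).const_mul (7 * ε * μ / 24))).add ((A.mul Q).const_mul (μ / 12))).add
      ((B.mul P).const_mul (μ / 12))).sub ((A.mul C).const_mul (μ / 12)))).congr_deriv ?_
    simp only [Pi.pow_apply, Nat.cast_ofNat]
    linear_combination (μ / 12 * sol.uxx x t - sol.u x t) * sol.eqn x t ht

theorem energyRate_le_growthRate_mul_energy {M₀ M₁ t : ℝ} (hε : 0 ≤ ε) (hμ : 0 < μ)
    (hM₁ : 0 ≤ M₁) (ht : t ∈ Ico 0 T)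
    (hbd : ∀ x ∈ Icc (0:ℝ) 1, |sol.u x t| ≤ M₀ ∧ sol.ux x t ≤ M₁) :
    sol.energyRate t ≤ growthRate ε μ M₀ M₁ * sol.energy t := by
  have hu := continuous_timeSlice sol.contu ht
  have hux := continuous_timeSlice sol.contux ht
  have huxx := continuous_timeSlice sol.contuxx ht
  rw [sol.energyRate_eq ht, energy, ← intervalIntegral.integral_const_mul,
    ← intervalIntegral.integral_const_mul]
  exact intervalIntegral.integral_mono_on zero_le_one
    ((by fun_prop : Continuous _).intervalIntegrable _ _)
    ((by fun_prop : Continuous _).intervalIntegrable _ _)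
    fun x hx => flux_le_growthRate_mul hε hμ hM₁ (hbd x hx).1 (hbd x hx).2

end ClassicalSol

/-- Gronwall estimate: if `|u| ≤ M₀` and `u_x ≤ M₁` on `[0,1] × [0,T)`, then the functional
`H(t) = (1/2)∫₀¹ (u² + (μ/6)u_x² + (μ²/144)u_xx²) dx` satisfies `H(t) ≤ H(0)·e^{Kt}` for a
constant `K ≥ 0` depending only on `ε, μ, M₀, M₁`. -/
theorem stmt6 (ε μ M₀ M₁ : ℝ) (hε : 0 < ε) (hμ : 0 < μ) (hM₀ : 0 ≤ M₀) (hM₁ : 0 ≤ M₁) :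
    ∃ K ≥ (0:ℝ), ∀ T > (0:ℝ), ∀ sol : ClassicalSol ε μ T,
      (∀ t ∈ Set.Ico (0:ℝ) T, ∀ x ∈ Set.Icc (0:ℝ) 1,
        |sol.u x t| ≤ M₀ ∧ sol.ux x t ≤ M₁) →
      ∀ t ∈ Set.Ico (0:ℝ) T,
        (1/2) * (∫ x in (0:ℝ)..1,
            ((sol.u x t)^2 + (μ/6) * (sol.ux x t)^2 + (μ^2/144) * (sol.uxx x t)^2))
          ≤ (1/2) * (∫ x in (0:ℝ)..1,
              ((sol.u x 0)^2 + (μ/6) * (sol.ux x 0)^2 + (μ^2/144) * (sol.uxx x 0)^2))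
            * Real.exp (K * t) := by
  refine ⟨growthRate ε μ M₀ M₁, growthRate_nonneg hε.le hμ.le hM₀ hM₁,
    fun T _ sol hbd t ht => ?_⟩
  have hsub : Icc 0 t ⊆ Ico 0 T := Icc_subset_Ico_right ht.2
  show sol.energy t ≤ sol.energy 0 * Real.exp (growthRate ε μ M₀ M₁ * t)
  simpa only [sub_zero] using le_mul_exp_of_hasDerivAt_le ht.1
    (sol.continuousOn_energy.mono hsub)
    (fun s hs => sol.hasDerivAt_energy ⟨hs.1, hs.2.trans ht.2⟩)
    (fun s hs => have hs' := hsub (Ioo_subset_Icc_self hs)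
      sol.energyRate_le_growthRate_mul_energy hε.le hμ hM₁ hs' (hbd s hs'))
end

section
/- Let 0 < μ ≤ 12 and let u : ℝ → ℝ be continuously differentiable and 1-periodic. Then max_{x∈[0,1]} u(x)² ≤ (13/μ)·∫₀¹ (u(x)² + (μ/12)·u'(x)²) dx. -/
/-!
Let `c = √(12/μ)`, so that `μ/12 = 1/c²`. For the weight `w(t) = tanh(c(t - b))/c` one has
`(w u²)' = u²/cosh² + 2 tanh · u · (u'/c) ≤ u² + (u'/c)²`, the defect being the square
`(tanh · u - u'/c)²`. Integrating from `x - 1/2` to `x` with `b = x - 1/2`, and from `x` to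
`x + 1/2` with `b = x + 1/2`, the weights vanish at the outer endpoints and both give
`tanh(c/2)/c · u(x)²` at `x`. By periodicity the two integrals add up to the energy, so
`u(x)² ≤ c/(2 tanh(c/2)) · ∫₀¹ (u² + (μ/12) u'²)`, and `c/(2 tanh(c/2)) ≤ 13c²/12 = 13/μ`
as soon as `c ≥ 1`, because `tanh(1/2) ≥ 6/13`.
-/

open Real

namespace Real

theorem inv_cosh_sq (x : ℝ) : (cosh x ^ 2)⁻¹ = 1 - tanh x ^ 2 := by
  have h := cosh_sq_sub_sinh_sq x
  have hc := (cosh_pos x).ne'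
  rw [tanh_eq_sinh_div_cosh]
  field_simp
  linarith

theorem hasDerivAt_tanh (x : ℝ) : HasDerivAt tanh (cosh x ^ 2)⁻¹ x := by
  have h := (hasDerivAt_sinh x).div (hasDerivAt_cosh x) (cosh_pos x).ne'
  rw [show tanh = sinh / cosh from funext tanh_eq_sinh_div_cosh]
  refine h.congr_deriv ?_
  rw [← one_div, ← cosh_sq_sub_sinh_sq x]
  ring

theorem continuous_tanh : Continuous tanh :=
  continuous_iff_continuousAt.2 fun x => (hasDerivAt_tanh x).continuousAt

theorem six_le_thirteen_mul_tanh_half {c : ℝ} (hc : 1 ≤ c) : 6 ≤ 13 * c * tanh (c / 2) := by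
  have hexp : rexp (c / 2) * rexp (c / 2) = rexp c := by rw [← exp_add]; ring_nf
  have he : rexp 1 ≤ rexp c := exp_le_exp.2 hc
  have hinv : rexp (c / 2) * rexp (-(c / 2)) = 1 := by rw [← exp_add]; simp
  have hpos := exp_pos (c / 2)
  have hneg := exp_pos (-(c / 2))
  have htanh : 6 / 13 ≤ tanh (c / 2) := by
    rw [tanh_eq, le_div_iff₀ (by positivity)]
    nlinarith [exp_one_gt_d9]
  nlinarith

theorem sq_mul_inv_cosh_sq_add_le (t a b : ℝ) :
    a ^ 2 * (cosh t ^ 2)⁻¹ + 2 * tanh t * a * b ≤ a ^ 2 + b ^ 2 := by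
  rw [inv_cosh_sq]
  nlinarith [sq_nonneg (tanh t * a - b)]

end Real

section Energy

variable {u : ℝ → ℝ} {c : ℝ}

theorem hasDerivAt_tanh_div_mul_sq {t : ℝ} (hu : DifferentiableAt ℝ u t) (hc : c ≠ 0) (b : ℝ) :
    HasDerivAt (fun s => tanh (c * (s - b)) / c * u s ^ 2)
      (u t ^ 2 * (cosh (c * (t - b)) ^ 2)⁻¹ + 2 * tanh (c * (t - b)) * u t * (deriv u t / c))
      t := by
  have hlin : HasDerivAt (fun s => c * (s - b)) c t := by
    simpa using ((hasDerivAt_id t).sub_const b).const_mul c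
  have hw := ((hasDerivAt_tanh _).comp t hlin).div_const c
  have hu2 := hu.hasDerivAt.fun_pow 2
  refine (hw.fun_mul hu2).congr_deriv ?_
  simp only [Function.comp_apply]
  field_simp
  ring

theorem tanh_div_mul_sq_sub_le_integral (hu : ContDiff ℝ 1 u) (hc : c ≠ 0) (b : ℝ) {p q : ℝ}
    (hpq : p ≤ q) :
    tanh (c * (q - b)) / c * u q ^ 2 - tanh (c * (p - b)) / c * u p ^ 2 ≤
      ∫ t in p..q, (u t ^ 2 + (deriv u t / c) ^ 2) := by
  have := hu.continuous
  have := hu.continuous_deriv le_rfl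
  have := continuous_tanh
  have hcosh : ∀ t, cosh (c * (t - b)) ^ 2 ≠ 0 := fun t => pow_ne_zero 2 (cosh_pos _).ne'
  have hderiv : Continuous fun t =>
      u t ^ 2 * (cosh (c * (t - b)) ^ 2)⁻¹ + 2 * tanh (c * (t - b)) * u t * (deriv u t / c) := by
    fun_prop (disch := exact hcosh _)
  rw [← intervalIntegral.integral_eq_sub_of_hasDerivAt
    (fun t _ => hasDerivAt_tanh_div_mul_sq (hu.differentiable one_ne_zero t) hc b)
    (hderiv.intervalIntegrable p q)]
  refine intervalIntegral.integral_mono_on hpq (hderiv.intervalIntegrable p q) ?_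
    fun t _ => sq_mul_inv_cosh_sq_add_le _ _ _
  exact Continuous.intervalIntegrable (by fun_prop) p q

theorem two_mul_tanh_div_mul_sq_le_integral (hu : ContDiff ℝ 1 u) (hc : c ≠ 0) {L : ℝ}
    (hL : 0 ≤ L) (x : ℝ) :
    2 * tanh (c * L) / c * u x ^ 2 ≤ ∫ t in x - L..x + L, (u t ^ 2 + (deriv u t / c) ^ 2) := by
  have hleft := tanh_div_mul_sq_sub_le_integral hu hc (x - L) (by linarith : x - L ≤ x)
  have hright := tanh_div_mul_sq_sub_le_integral hu hc (x + L) (by linarith : x ≤ x + L)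
  have hint : Continuous fun t => u t ^ 2 + (deriv u t / c) ^ 2 := by
    have := hu.continuous_deriv le_rfl
    have := hu.continuous
    fun_prop
  rw [← intervalIntegral.integral_add_adjacent_intervals (hint.intervalIntegrable _ x)
    (hint.intervalIntegrable x _)]
  simp only [sub_self, mul_zero, tanh_zero, zero_div, zero_mul, sub_zero, zero_sub,
    show x - (x + L) = -L by ring, show x - (x - L) = L by ring, mul_neg, tanh_neg,
    neg_div, neg_mul, neg_neg] at hleft hright
  linarith [show 2 * tanh (c * L) / c * u x ^ 2 = 2 * (tanh (c * L) / c * u x ^ 2) by ring]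

end Energy

theorem Function.Periodic.deriv {𝕜 F : Type*} [NontriviallyNormedField 𝕜] [NormedAddCommGroup F]
    [NormedSpace 𝕜 F] {f : 𝕜 → F} {T : 𝕜} (hf : Function.Periodic f T) :
    Function.Periodic (deriv f) T := fun x => by
  rw [← deriv_comp_add_const, funext hf]

/-- Sobolev-type embedding with explicit constant: for `0 < μ ≤ 12` and a continuously
differentiable 1-periodic `u`, `max_{[0,1]} u² ≤ (13/μ)·∫₀¹ (u² + (μ/12)(u')²)`. -/
theorem stmt7 (μ : ℝ) (hμ : 0 < μ) (hμ' : μ ≤ 12) (u : ℝ → ℝ)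
    (hu : ContDiff ℝ 1 u) (hp : Function.Periodic u 1) :
    ∀ x ∈ Set.Icc (0:ℝ) 1,
      (u x)^2 ≤ (13/μ) * ∫ y in (0:ℝ)..1, ((u y)^2 + (μ/12) * (deriv u y)^2) := by
  intro x _
  set c := √(12 / μ)
  have hc2 : c ^ 2 = 12 / μ := sq_sqrt (by positivity)
  have hc1 : 1 ≤ c := one_le_sqrt.2 ((one_le_div₀ hμ).2 hμ')
  have henergy : (fun t => u t ^ 2 + (deriv u t / c) ^ 2) =
      fun t => u t ^ 2 + μ / 12 * deriv u t ^ 2 := by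
    funext t
    rw [div_pow, hc2]
    field_simp
  have hper : Function.Periodic (fun t => u t ^ 2 + μ / 12 * deriv u t ^ 2) 1 := fun t => by
    simp only [hp t, hp.deriv t]
  have hbound := two_mul_tanh_div_mul_sq_le_integral hu (by positivity : c ≠ 0)
    (by norm_num : (0 : ℝ) ≤ 1 / 2) x
  rw [henergy, show x + 1 / 2 = x - 1 / 2 + 1 by ring, hper.intervalIntegral_add_eq (x - 1 / 2) 0,
    zero_add] at hbound
  have hconst : 1 ≤ 13 / μ * (2 * tanh (c * (1 / 2)) / c) := by
    have h13 : 13 / μ = 13 * c ^ 2 / 12 := by rw [hc2]; field_simp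
    rw [h13, mul_one_div, div_mul_div_comm, le_div_iff₀ (by positivity)]
    nlinarith [six_le_thirteen_mul_tanh_half hc1]
  calc u x ^ 2 ≤ 13 / μ * (2 * tanh (c * (1 / 2)) / c) * u x ^ 2 :=
        le_mul_of_one_le_left (sq_nonneg _) hconst
    _ ≤ 13 / μ * ∫ t in (0 : ℝ)..1, (u t ^ 2 + μ / 12 * deriv u t ^ 2) := by
        rw [mul_assoc]
        gcongr
end
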